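/- Let 𝔥 be a finite-dimensional complex 2-step nilpotent Lie algebra, let Δ ⊆ 𝔥 be a subspace equipped with a Hermitian inner product ρ, let E be a finite set of nonzero integers, let c : E → Δ, and define v : [0,1] → 𝔥 by v(t) := Σ_{n∈E} c_n e^{2πint}. Then the endpoint satisfies E(v) = Σ_{n∈E} (1/(4πin)) ⁅c_n, c'_{−n}⁆, where c'_m := c_m if m ∈ E and c'_m := 0 otherwise, and the energy satisfies ∫₀¹ ρ(v(t),v(t)) dt = Σ_{n∈E} ρ(c_n,c_n). -/

import Mathlib

/-!
The control `v` is a trigonometric polynomial without constant term, so its mean vanishes and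
its primitive is again an explicit trigonometric polynomial. Both the bracket term of the
endpoint and the energy are then sesquilinear in the modes, and integrating a product of two
modes over `[0,1]` keeps only the resonant pairs: `m = -n` for the bracket of the primitive
with `v`, and `m = n` for `ρ(v,v)`.
-/

open MeasureTheory

/-- The endpoint of the horizontal curve with control `u` in the complex 2-step model
group `(𝔥,∗)`. -/
noncomputable def endpointMapC {L : Type*} [NormedAddCommGroup L] [NormedSpace ℂ L]
    (bracket : L →ₗ[ℂ] L →ₗ[ℂ] L) (u : ℝ → L) : L :=
  (∫ t in (0:ℝ)..1, u t) +
    (2⁻¹ : ℝ) • ∫ t in (0:ℝ)..1, bracket (∫ s in (0:ℝ)..t, u s) (u t)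

open Complex Real

noncomputable def circleMode (n : ℤ) (t : ℝ) : ℂ := exp (2 * π * I * n * t)

namespace circleMode

@[fun_prop]
lemma continuous (n : ℤ) : Continuous (circleMode n) := by
  unfold circleMode; fun_prop

lemma add (m n : ℤ) (t : ℝ) : circleMode (m + n) t = circleMode m t * circleMode n t := by
  rw [circleMode, circleMode, circleMode, ← Complex.exp_add]
  push_cast
  ring_nf

lemma conj (n : ℤ) (t : ℝ) : starRingEnd ℂ (circleMode n t) = circleMode (-n) t := by
  rw [circleMode, circleMode, ← exp_conj]
  simp only [map_mul, conj_I, conj_ofReal, map_ofNat, map_intCast]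
  push_cast
  ring_nf

lemma freq_ne_zero {n : ℤ} (hn : n ≠ 0) : (2 * π * I * n : ℂ) ≠ 0 := by
  simp [pi_ne_zero, I_ne_zero, hn]

lemma integral_of_ne_zero {n : ℤ} (hn : n ≠ 0) (t : ℝ) :
    ∫ s in (0:ℝ)..t, circleMode n s = (circleMode n t - 1) / (2 * π * I * n) := by
  simp only [circleMode]
  rw [integral_exp_mul_complex (freq_ne_zero hn)]
  simp

lemma integral_unitInterval (n : ℤ) :
    ∫ t in (0:ℝ)..1, circleMode n t = if n = 0 then 1 else 0 := by
  split_ifs with hn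
  · simp [circleMode, hn]
  · rw [integral_of_ne_zero hn, sub_eq_zero.mpr, zero_div]
    rw [circleMode, ← exp_int_mul_two_pi_mul_I n]
    push_cast
    ring_nf

lemma integral_conj_mul (m n : ℤ) :
    ∫ t in (0:ℝ)..1, starRingEnd ℂ (circleMode m t) * circleMode n t =
      if m = n then 1 else 0 := by
  simp_rw [conj, ← add, integral_unitInterval, neg_add_eq_zero]

lemma integral_primitive_mul (m : ℤ) {n : ℤ} (hn : n ≠ 0) :
    ∫ t in (0:ℝ)..1, (circleMode m t - 1) / (2 * π * I * m) * circleMode n t =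
      if n = -m then (2 * π * I * m)⁻¹ else 0 := by
  have hmode : ∀ t, (circleMode m t - 1) / (2 * π * I * m) * circleMode n t =
      (2 * π * I * m)⁻¹ * (circleMode (m + n) t - circleMode n t) := fun t => by
    rw [add]; ring
  simp_rw [hmode]
  rw [intervalIntegral.integral_const_mul,
    intervalIntegral.integral_sub ((continuous _).intervalIntegrable 0 1)
      ((continuous _).intervalIntegrable 0 1),
    integral_unitInterval, integral_unitInterval, if_neg hn]
  simp only [add_eq_zero_iff_neg_eq', neg_eq_iff_eq_neg, sub_zero, mul_ite, mul_one, mul_zero]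

end circleMode

lemma integral_finset_sum_smul_const {V : Type*} [NormedAddCommGroup V] [NormedSpace ℂ V]
    [CompleteSpace V] {ι : Type*} (s : Finset ι)
    (f : ι → ℝ → ℂ) (z : ι → V) (a b : ℝ) (hf : ∀ i ∈ s, Continuous (f i)) :
    ∫ t in a..b, ∑ i ∈ s, f i t • z i = ∑ i ∈ s, (∫ t in a..b, f i t) • z i := by
  rw [intervalIntegral.integral_finsetSum (f := fun i t => f i t • z i) fun i hi =>
    ((hf i hi).smul continuous_const).intervalIntegrable a b]
  exact Finset.sum_congr rfl fun i _ => intervalIntegral.integral_smul_const (f i) (z i)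

lemma LinearMap.sum_smul_apply_sum_smul {R S : Type*} [CommSemiring R] [CommSemiring S]
    {σ : R →+* S} {M N P : Type*} [AddCommMonoid M] [AddCommMonoid N] [AddCommMonoid P]
    [Module R M] [Module S N] [Module S P] (B : M →ₛₗ[σ] N →ₗ[S] P) {ι κ : Type*}
    (s : Finset ι) (s' : Finset κ) (a : ι → R) (x : ι → M) (b : κ → S) (y : κ → N) :
    B (∑ i ∈ s, a i • x i) (∑ j ∈ s', b j • y j) =
      ∑ p ∈ s ×ˢ s', (σ (a p.1) * b p.2) • B (x p.1) (y p.2) := by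
  simp only [map_sum, map_smulₛₗ, LinearMap.sum_apply, LinearMap.smul_apply,
    Finset.smul_sum, smul_smul, Finset.sum_product]
  rw [Finset.sum_comm]
  exact Finset.sum_congr rfl fun i _ => Finset.sum_congr rfl fun j _ => by
    rw [RingHom.id_apply, mul_comm]

noncomputable def trigPoly {V : Type*} [AddCommGroup V] [Module ℂ V] (E : Finset ℤ)
    (c : ℤ → V) (t : ℝ) : V :=
  ∑ n ∈ E, circleMode n t • c n

namespace trigPoly

variable {V W U : Type*} [NormedAddCommGroup V] [NormedSpace ℂ V] [CompleteSpace V]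
  [NormedAddCommGroup W] [NormedSpace ℂ W] [NormedAddCommGroup U] [NormedSpace ℂ U]
  [CompleteSpace U] {E : Finset ℤ}

lemma integral_unitInterval (hE : 0 ∉ E) (c : ℤ → V) :
    ∫ t in (0:ℝ)..1, trigPoly E c t = 0 := by
  unfold trigPoly
  rw [integral_finset_sum_smul_const _ _ _ _ _ fun n _ => circleMode.continuous n]
  exact Finset.sum_eq_zero fun n hn => by
    rw [circleMode.integral_unitInterval, if_neg (ne_of_mem_of_not_mem hn hE), zero_smul]

lemma integral_eq_sum (hE : 0 ∉ E) (c : ℤ → V) (t : ℝ) :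
    ∫ s in (0:ℝ)..t, trigPoly E c s =
      ∑ n ∈ E, ((circleMode n t - 1) / (2 * π * I * n)) • c n := by
  unfold trigPoly
  rw [integral_finset_sum_smul_const _ _ _ _ _ fun n _ => circleMode.continuous n]
  exact Finset.sum_congr rfl fun n hn => by
    rw [circleMode.integral_of_ne_zero (ne_of_mem_of_not_mem hn hE)]

lemma integral_bilin_primitive_eq_sum (B : V →ₗ[ℂ] W →ₗ[ℂ] U) (hE : 0 ∉ E) (c : ℤ → V)
    (d : ℤ → W) :
    ∫ t in (0:ℝ)..1, B (∫ s in (0:ℝ)..t, trigPoly E c s) (trigPoly E d t) =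
      ∑ n ∈ E, (2 * π * I * n)⁻¹ • B (c n) (if -n ∈ E then d (-n) else 0) := by
  simp_rw [integral_eq_sum hE, trigPoly, LinearMap.sum_smul_apply_sum_smul, RingHom.id_apply]
  rw [integral_finset_sum_smul_const _ _ _ _ _ fun p _ => by fun_prop, Finset.sum_product]
  refine Finset.sum_congr rfl fun n _ => ?_
  rw [Finset.sum_congr rfl fun m hm => by
    rw [circleMode.integral_primitive_mul n (ne_of_mem_of_not_mem hm hE)]]
  simp_rw [ite_smul, zero_smul]
  rw [Finset.sum_ite_eq']
  split_ifs <;> simp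

lemma integral_sesq_eq_sum (B : W →ₗ⋆[ℂ] W →ₗ[ℂ] U) (c d : ℤ → W) :
    ∫ t in (0:ℝ)..1, B (trigPoly E c t) (trigPoly E d t) = ∑ n ∈ E, B (c n) (d n) := by
  simp_rw [trigPoly, LinearMap.sum_smul_apply_sum_smul]
  rw [integral_finset_sum_smul_const _ _ _ _ _ fun p _ => by fun_prop, Finset.sum_product]
  refine Finset.sum_congr rfl fun n hn => ?_
  simp_rw [circleMode.integral_conj_mul, ite_smul, one_smul, zero_smul]
  rw [Finset.sum_ite_eq, if_pos hn]

end trigPoly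

theorem stmt_3_general {L : Type*} [NormedAddCommGroup L] [NormedSpace ℂ L] [FiniteDimensional ℂ L]
    (bracket : L →ₗ[ℂ] L →ₗ[ℂ] L)
    -- `ρ` is a Hermitian inner product on `Δ` (sesquilinear, conjugate-symmetric and
    -- positive definite on `Δ`)
    (ρ : L →ₗ⋆[ℂ] L →ₗ[ℂ] ℂ)
    (E : Finset ℤ) (hE : (0:ℤ) ∉ E)
    (c : ℤ → L)
    (v : ℝ → L)
    (hv : ∀ t : ℝ, v t = ∑ n ∈ E,
      Complex.exp (2 * Real.pi * Complex.I * (n : ℂ) * (t : ℂ)) • c n) :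
    endpointMapC bracket v =
      ∑ n ∈ E, ((4 * Real.pi * Complex.I * (n : ℂ))⁻¹) •
        bracket (c n) (if -n ∈ E then c (-n) else 0) ∧
    (∫ t in (0:ℝ)..1, ρ (v t) (v t)) = ∑ n ∈ E, ρ (c n) (c n) := by
  obtain rfl : v = trigPoly E c := funext hv
  refine ⟨?_, trigPoly.integral_sesq_eq_sum ρ c c⟩
  rw [endpointMapC, trigPoly.integral_unitInterval hE,
    trigPoly.integral_bilin_primitive_eq_sum bracket hE, zero_add, Finset.smul_sum]
  refine Finset.sum_congr rfl fun n _ => ?_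
  rw [← Complex.coe_smul, smul_smul]
  congr 1
  push_cast
  rw [← mul_inv]
  ring_nf

/-- for `v(t) = Σ_{n∈E} c_n e^{2πint}` with `E` a finite set of nonzero
integers and `c_n ∈ Δ`, one has `E(v) = Σ_{n∈E} (1/(4πin)) ⁅c_n, c'_{-n}⁆` (where
`c'_m = c_m` if `m ∈ E` and `0` otherwise), and
`∫₀¹ ρ(v,v) = Σ_{n∈E} ρ(c_n,c_n)`. -/
theorem stmt_3 {L : Type*} [NormedAddCommGroup L] [NormedSpace ℂ L] [FiniteDimensional ℂ L]
    (bracket : L →ₗ[ℂ] L →ₗ[ℂ] L)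
    (halt : ∀ x : L, bracket x x = 0)
    (h2step : ∀ x y z : L, bracket (bracket x y) z = 0)
    (Δ : Submodule ℂ L)
    -- `ρ` is a Hermitian inner product on `Δ` (sesquilinear, conjugate-symmetric and
    -- positive definite on `Δ`)
    (ρ : L →ₗ⋆[ℂ] L →ₗ[ℂ] ℂ)
    (hherm : ∀ x ∈ Δ, ∀ y ∈ Δ, ρ y x = starRingEnd ℂ (ρ x y))
    (hpos : ∀ x ∈ Δ, x ≠ 0 → 0 < (ρ x x).re)
    (E : Finset ℤ) (hE : (0:ℤ) ∉ E)
    (c : ℤ → L) (hc : ∀ n ∈ E, c n ∈ Δ)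
    (v : ℝ → L)
    (hv : ∀ t : ℝ, v t = ∑ n ∈ E,
      Complex.exp (2 * Real.pi * Complex.I * (n : ℂ) * (t : ℂ)) • c n) :
    endpointMapC bracket v =
      ∑ n ∈ E, ((4 * Real.pi * Complex.I * (n : ℂ))⁻¹) •
        bracket (c n) (if -n ∈ E then c (-n) else 0) ∧
    (∫ t in (0:ℝ)..1, ρ (v t) (v t)) = ∑ n ∈ E, ρ (c n) (c n) :=
  stmt_3_general bracket ρ E hE c v hv
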